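/- arXiv:2206.08133 — 2 statements merged into one kernel-verified Lean document; each statement's English description precedes it below -/
import Mathlib

section
/- Suppose the price functions are affine P_j(d) = α_j − β_j d with β_j > 0, each C_i is convex, and Assumption A2 holds. Then any maximizer (q*, f*) of Φ(f, q) = w(f, q) − (1/2) Σ_j β_j (Hᵀq²)_j over the set {q ≥ 0, |f| ≤ c} is a Nash equilibrium of the networked Cournot game with market maker. -/
open Finset intervalIntegral

/-- Total consumption at market `j`: `(Bf + Hᵀq)_j`. -/
noncomputable def demand {n m l : ℕ} (B : Fin m → Fin l → ℝ) (H : Fin n → Fin m → ℝ)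
    (f : Fin l → ℝ) (q : Fin n → ℝ) (j : Fin m) : ℝ :=
  (∑ k, B j k * f k) + ∑ i, H i j * q i

/-- Producer `i`'s utility. -/
noncomputable def producerU {n m l : ℕ} (B : Fin m → Fin l → ℝ) (H : Fin n → Fin m → ℝ)
    (P : Fin m → ℝ → ℝ) (C : Fin n → ℝ → ℝ) (i : Fin n)
    (f : Fin l → ℝ) (q : Fin n → ℝ) : ℝ :=
  q i * (∑ j, H i j * P j (demand B H f q j)) - C i (q i)

/-- Market maker's (Marshallian welfare) utility. -/
noncomputable def makerW {n m l : ℕ} (B : Fin m → Fin l → ℝ) (H : Fin n → Fin m → ℝ)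
    (P : Fin m → ℝ → ℝ) (C : Fin n → ℝ → ℝ)
    (f : Fin l → ℝ) (q : Fin n → ℝ) : ℝ :=
  (∑ j, ∫ s in (0 : ℝ)..(demand B H f q j), P j s) - ∑ i, C i (q i)

/-- The potential `Φ(f,q) = w(f,q) − (1/2) Σ_j β j (Hᵀ q²)_j`. -/
noncomputable def potentialΦ {n m l : ℕ} (B : Fin m → Fin l → ℝ) (H : Fin n → Fin m → ℝ)
    (P : Fin m → ℝ → ℝ) (C : Fin n → ℝ → ℝ) (β : Fin m → ℝ)
    (f : Fin l → ℝ) (q : Fin n → ℝ) : ℝ :=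
  makerW B H P C f q - (1 / 2) * ∑ j, β j * ∑ i, H i j * q i ^ 2

lemma int_affine (a b t : ℝ) : (∫ s in (0:ℝ)..t, (a - b * s)) = a * t - b * (t^2/2) := by
  have h1 : IntervalIntegrable (fun s : ℝ => b * s) MeasureTheory.volume 0 t :=
    (continuous_const.mul continuous_id).intervalIntegrable 0 t
  rw [intervalIntegral.integral_sub (intervalIntegrable_const) h1,
      intervalIntegral.integral_const, intervalIntegral.integral_const_mul, integral_id]
  simp; ring

lemma sum_diff_single {n : ℕ} (F G : Fin n → ℝ) (i : Fin n) (h : ∀ k, k ≠ i → F k = G k) :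
    (∑ k, F k) - (∑ k, G k) = F i - G i := by
  rw [← Finset.sum_sub_distrib]
  exact Finset.sum_eq_single i (fun b _ hb => by rw [h b hb]; ring) (by simp)

/-- With affine prices (`β j > 0`), convex `C¹` costs, and A2, any maximizer
`(q*, f*)` of `Φ` over `{q ≥ 0, |f| ≤ c}` is a Nash equilibrium of the networked Cournot game
with market maker. -/
theorem stmt7 {n m l : ℕ}
    (B : Fin m → Fin l → ℝ) (H : Fin n → Fin m → ℝ) (c : Fin l → ℝ)
    (α β : Fin m → ℝ) (hβ : ∀ j, 0 < β j)
    (C : Fin n → ℝ → ℝ) (hC : ∀ i, ConvexOn ℝ Set.univ (C i))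
    (hC1 : ∀ i, Differentiable ℝ (C i))
    -- Assumption A2: each row of H has exactly one entry equal to 1, the rest 0
    (hH01 : ∀ i j, H i j = 0 ∨ H i j = 1)
    (hH1 : ∀ i, ∑ j, H i j = 1)
    (P : Fin m → ℝ → ℝ) (hP : ∀ j d, P j d = α j - β j * d)
    -- (q*, f*) is a feasible maximizer of Φ
    (qs : Fin n → ℝ) (fs : Fin l → ℝ)
    (hqs : ∀ i, 0 ≤ qs i) (hfs : ∀ k, |fs k| ≤ c k)
    (hmax : ∀ (q : Fin n → ℝ) (f : Fin l → ℝ), (∀ i, 0 ≤ q i) → (∀ k, |f k| ≤ c k) →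
      potentialΦ B H P C β f q ≤ potentialΦ B H P C β fs qs) :
    -- (q*, f*) is a Nash equilibrium
    (∀ (i : Fin n) (x : ℝ), 0 ≤ x →
        producerU B H P C i fs (Function.update qs i x) ≤ producerU B H P C i fs qs)
    ∧ (∀ f : Fin l → ℝ, (∀ k, |f k| ≤ c k) → makerW B H P C f qs ≤ makerW B H P C fs qs) := by
  have hint : ∀ (j : Fin m) (t : ℝ), (∫ s in (0:ℝ)..t, P j s) = α j * t - β j * (t^2/2) := by
    intro j t
    simp only [hP]
    exact int_affine _ _ _
  have hΦ : ∀ (f : Fin l → ℝ) (q : Fin n → ℝ), potentialΦ B H P C β f q =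
      (∑ j, (α j * demand B H f q j - β j * ((demand B H f q j)^2/2))) - (∑ k, C k (q k))
        - (1/2) * ∑ j, β j * ∑ k, H k j * q k ^ 2 := by
    intro f q
    simp only [potentialΦ, makerW, hint]
  constructor
  · intro i x hx
    set q' := Function.update qs i x with hq'def
    have hq' : ∀ k, 0 ≤ q' k := by
      intro k
      by_cases h : k = i
      · subst h; simpa [q'] using hx
      · simpa [q', Function.update_of_ne h] using hqs k
    have key := hmax q' fs hq' hfs
    -- the unique market of producer i
    have hex : ∃ j0, H i j0 = 1 := by
      by_contra h
      push_neg at h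
      have h0 : ∀ j, H i j = 0 := fun j => (hH01 i j).resolve_right (h j)
      have := hH1 i
      simp [h0] at this
    obtain ⟨j0, hj0⟩ := hex
    have hother : ∀ j, j ≠ j0 → H i j = 0 := by
      intro j hj
      have hsum := hH1 i
      rw [← Finset.add_sum_erase _ _ (Finset.mem_univ j0)] at hsum
      have hrest : ∑ j' ∈ Finset.univ.erase j0, H i j' = 0 := by linarith
      have hnonneg : ∀ j' ∈ Finset.univ.erase j0, 0 ≤ H i j' := by
        intro j' _
        rcases hH01 i j' with h | h <;> simp [h]
      exact (Finset.sum_eq_zero_iff_of_nonneg hnonneg).mp hrest j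
        (Finset.mem_erase.mpr ⟨hj, Finset.mem_univ j⟩)
    set a := qs i with ha
    set δ := x - a with hδ
    -- how the weighted sums change under the update
    have hupd : ∀ (g : ℝ → ℝ) (j : Fin m),
        (∑ k, H k j * g (q' k)) = (∑ k, H k j * g (qs k)) + H i j * (g x - g a) := by
      intro g j
      have h1 : ∀ k, H k j * g (q' k) = H k j * g (qs k) +
          (if k = i then H i j * (g x - g a) else 0) := by
        intro k
        by_cases h : k = i
        · subst h; simp [q', Function.update_self, ha]; ring
        · rw [if_neg h]; simp [q', Function.update_of_ne h]
      rw [Finset.sum_congr rfl (fun k _ => h1 k), Finset.sum_add_distrib,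
        Finset.sum_ite_eq' Finset.univ i (fun _ => H i j * (g x - g a))]
      simp
    have hd : ∀ j, demand B H fs q' j = demand B H fs qs j + H i j * δ := by
      intro j
      have h2 : (∑ k, H k j * q' k) = (∑ k, H k j * qs k) + H i j * (x - a) :=
        hupd (fun t => t) j
      simp only [demand]
      rw [hδ, h2]
      ring
    have hdj : ∀ j, j ≠ j0 → demand B H fs q' j = demand B H fs qs j := by
      intro j hj; rw [hd, hother j hj]; ring
    set D := demand B H fs qs j0 with hD
    have hD' : demand B H fs q' j0 = D + δ := by rw [hd, hj0]; ring
    -- potential difference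
    have hpen : ∀ j : Fin m, (∑ k, H k j * q' k ^ 2) = (∑ k, H k j * qs k ^ 2)
        + H i j * (x ^ 2 - a ^ 2) := fun j => hupd (fun t => t ^ 2) j
    have hA : (∑ j, (α j * demand B H fs q' j - β j * ((demand B H fs q' j)^2/2)))
        - (∑ j, (α j * demand B H fs qs j - β j * ((demand B H fs qs j)^2/2)))
        = (α j0 * (D + δ) - β j0 * ((D + δ)^2/2)) - (α j0 * D - β j0 * (D^2/2)) := by
      rw [sum_diff_single _ _ j0 (fun j hj => by rw [hdj j hj]), hD', hD]
    have hB : (∑ k, C k (q' k)) - (∑ k, C k (qs k)) = C i x - C i a := by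
      rw [sum_diff_single _ _ i (fun k hk => by simp [q', Function.update_of_ne hk])]
      simp [q', ha]
    have hPd : (∑ j, β j * ∑ k, H k j * q' k ^ 2) - (∑ j, β j * ∑ k, H k j * qs k ^ 2)
        = β j0 * (x ^ 2 - a ^ 2) := by
      have : ∀ j, β j * (∑ k, H k j * q' k ^ 2) =
          β j * (∑ k, H k j * qs k ^ 2) + β j * (H i j * (x ^ 2 - a ^ 2)) := by
        intro j; rw [hpen j]; ring
      rw [Finset.sum_congr rfl (fun j _ => this j), Finset.sum_add_distrib]
      have h2 : (∑ j, β j * (H i j * (x ^ 2 - a ^ 2))) = β j0 * (x ^ 2 - a ^ 2) := by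
        rw [Finset.sum_eq_single j0 (fun b _ hb => by rw [hother b hb]; ring) (by simp)]
        rw [hj0]; ring
      rw [h2]; ring
    -- producer utility values
    have hu : ∀ q : Fin n → ℝ, (∑ j, H i j * P j (demand B H fs q j))
        = P j0 (demand B H fs q j0) := by
      intro q
      rw [Finset.sum_eq_single j0 (fun b _ hb => by rw [hother b hb]; ring) (by simp)]
      rw [hj0]; ring
    have hu' : producerU B H P C i fs q' = x * (α j0 - β j0 * (D + δ)) - C i x := by
      simp only [producerU]
      rw [hu q', hD', hP]
      simp [q', Function.update_self]
    have hu0 : producerU B H P C i fs qs = a * (α j0 - β j0 * D) - C i a := by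
      simp only [producerU]
      rw [hu qs, hP, ← hD, ← ha]
    -- exact potential identity
    have hpot : potentialΦ B H P C β fs q' - potentialΦ B H P C β fs qs
        = producerU B H P C i fs q' - producerU B H P C i fs qs := by
      have hid : (α j0 * (D + δ) - β j0 * ((D + δ)^2/2)) - (α j0 * D - β j0 * (D^2/2))
          - (C i x - C i a) - (1/2) * (β j0 * (x ^ 2 - a ^ 2))
          = (x * (α j0 - β j0 * (D + δ)) - C i x) - (a * (α j0 - β j0 * D) - C i a) := by
        rw [hδ]; ring
      rw [hΦ, hΦ, hu', hu0]
      linarith [hA, hB, hPd, hid]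
    linarith [hpot, key]
  · intro f hf
    have := hmax qs f hqs hf
    simp only [potentialΦ] at this
    linarith
end

section
/- Suppose the price functions are affine P_j(d) = α_j − β_j d with α_j > 0, β_j > 0, each C_i is convex C¹, and A2 holds. Then the networked Cournot game with market maker has a unique Nash equilibrium (q*, f*) in the variables (q, Bf) — i.e., q* and the net injection vector r* = Bf* are unique — characterized as the maximizer of the strictly concave (in (q, r)) potential Φ over the compact convex feasible set. -/
/-!
With affine prices `Φ = G - ∑ i, C i (q i)` for a quadratic `G`, so
`G (x + δ) = G x + DG(x) δ + Q δ` exactly, where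
`Q δ = -(∑ j, β j (Bδf + Hᵀδq)_j ^ 2 + ∑ i, S i * δq i ^ 2) / 2` and `S i = ∑ j, β j * H i j`
is positive under A2. Because `H i j ^ 2 = H i j`, `Φ` is an exact
potential: a producer's unilateral gain is the gain in `Φ`, and the maker's payoff differs from
`Φ` by a function of `q` alone.

Existence: `Φ + ∑ i, q i` is bounded above on `q ≥ 0`, so `Φ` attains its maximum on the
feasible set, and a maximizer of an exact potential is a Nash equilibrium.
Uniqueness: at a Nash equilibrium `x`, the one-sided derivative of `Φ` in each player's own
variables towards a feasible `y` is nonpositive; with the convexity of the costs these add up to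
`Φ y ≤ Φ x + Q (y - x)`. Taking for `y` the maximizer forces `Q (y - x) ≥ 0`, i.e. the same `q`
and the same `Bf`.
-/

open Finset intervalIntegral

open Filter Topology

lemma Fintype.sum_update_apply {ι α M : Type*} [Fintype ι] [DecidableEq ι] [AddCommGroup M]
    (g : ι → α → M) (q : ι → α) (i : ι) (x : α) :
    ∑ i', g i' (Function.update q i x i') = ∑ i', g i' (q i') + (g i x - g i (q i)) := by
  have hcompl : ∑ j ∈ {i}ᶜ, g j (Function.update q i x j) = ∑ j ∈ {i}ᶜ, g j (q j) :=
    Finset.sum_congr rfl fun j hj => by rw [Function.update_of_ne (by simpa using hj)]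
  rw [Fintype.sum_eq_add_sum_compl i, Fintype.sum_eq_add_sum_compl i fun i' => g i' (q i'),
    Function.update_self, hcompl]
  abel

lemma Function.update_eq_add_smul_single {ι R : Type*} [DecidableEq ι] [Ring R] (q : ι → R)
    (i : ι) (x : R) : Function.update q i x = q + (x - q i) • Pi.single i 1 := by
  ext i'
  by_cases h : i' = i
  · subst h; simp
  · simp [h]

lemma Finset.sum_add_mul_add_sq_mul {ι R : Type*} [CommSemiring R] (s : Finset ι)
    (a b c : ι → R) (t : R) :
    ∑ i ∈ s, (a i + t * b i + t ^ 2 * c i)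
      = ∑ i ∈ s, a i + t * ∑ i ∈ s, b i + t ^ 2 * ∑ i ∈ s, c i := by
  rw [sum_add_distrib, sum_add_distrib, mul_sum, mul_sum]

lemma integral_sub_mul (a b d : ℝ) : ∫ s in (0 : ℝ)..d, (a - b * s) = a * d - b * d ^ 2 / 2 := by
  rw [integral_sub intervalIntegrable_const ((continuous_const_mul b).intervalIntegrable _ _),
    integral_const, integral_const_mul, integral_id]
  simp
  ring

lemma le_of_forall_add_mul_le {a b c : ℝ} (h : ∀ t ∈ Set.Ioc (0 : ℝ) 1, a + t * b ≤ c) :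
    a ≤ c := by
  have hlim : Tendsto (fun t => a + t * b) (𝓝[>] 0) (𝓝 a) := by
    simpa using ((by fun_prop : Continuous fun t : ℝ => a + t * b).tendsto 0).mono_left
      nhdsWithin_le_nhds
  refine le_of_tendsto hlim ?_
  filter_upwards [Ioo_mem_nhdsGT one_pos] with t ht using h t ⟨ht.1, ht.2.le⟩

lemma abs_add_mul_sub_le {a b c t : ℝ} (ha : |a| ≤ c) (hb : |b| ≤ c) (ht₀ : 0 ≤ t)
    (ht₁ : t ≤ 1) : |a + t * (b - a)| ≤ c := by
  rw [abs_le] at *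
  constructor <;> nlinarith

lemma mul_sub_mul_sq_div_two_le {a b x : ℝ} (hb : 0 < b) :
    a * x - b * x ^ 2 / 2 ≤ a ^ 2 / (2 * b) := by
  rw [le_div_iff₀ (by positivity)]
  nlinarith [sq_nonneg (a - b * x)]

lemma ConvexOn.add_deriv_mul_sub_le {f : ℝ → ℝ} (hf : ConvexOn ℝ Set.univ f) {a y : ℝ}
    (hd : DifferentiableAt ℝ f a) (hay : a ≤ y) : f a + deriv f a * (y - a) ≤ f y := by
  rcases hay.eq_or_lt with rfl | hlt
  · simp
  have := hf.deriv_le_slope (Set.mem_univ a) (Set.mem_univ y) hlt hd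
  rw [slope_def_field, le_div_iff₀ (sub_pos.2 hlt)] at this
  linarith

lemma ConvexOn.le_add_mul_sub {f : ℝ → ℝ} (hf : ConvexOn ℝ Set.univ f) {x y t : ℝ} (ht₀ : 0 ≤ t)
    (ht₁ : t ≤ 1) : f (x + t * (y - x)) ≤ f x + t * (f y - f x) := by
  have := hf.2 (Set.mem_univ x) (Set.mem_univ y) (sub_nonneg.2 ht₁) ht₀ (by ring)
  rw [smul_eq_mul, smul_eq_mul, smul_eq_mul, smul_eq_mul,
    show (1 - t) * x + t * y = x + t * (y - x) by ring] at this
  linarith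

lemma exists_forall_ge_of_add_sum_le {ι κ : Type*} [Fintype ι] {F : (κ → ℝ) × (ι → ℝ) → ℝ}
    (hF : Continuous F) (c : κ → ℝ) (hc : ∀ k, 0 ≤ c k) {K : ℝ}
    (hK : ∀ f q, (∀ i, 0 ≤ q i) → F (f, q) + ∑ i, q i ≤ K) :
    ∃ fs qs, (∀ i, 0 ≤ qs i) ∧ (∀ k, |fs k| ≤ c k) ∧
      ∀ f q, (∀ i, 0 ≤ q i) → (∀ k, |f k| ≤ c k) → F (f, q) ≤ F (fs, qs) := by
  set box := Set.univ.pi fun k => Set.Icc (-c k) (c k)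
  set s := box ×ˢ Set.univ.pi fun _ : ι => Set.Ici (0 : ℝ)
  have hs : IsClosed s :=
    (isClosed_set_pi fun _ _ => isClosed_Icc).prod (isClosed_set_pi fun _ _ => isClosed_Ici)
  have h₀ : ((0 : κ → ℝ), (0 : ι → ℝ)) ∈ s :=
    ⟨fun k _ => ⟨neg_nonpos.2 (hc k), hc k⟩, fun _ _ => Set.self_mem_Ici⟩
  have hcompact : IsCompact (box ×ˢ Set.univ.pi fun _ : ι => Set.Icc (0 : ℝ) (K - F (0, 0))) :=
    (isCompact_univ_pi fun _ => isCompact_Icc).prod (isCompact_univ_pi fun _ => isCompact_Icc)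
  have hfar : ∀ᶠ p in cocompact _ ⊓ 𝓟 s, F p ≤ F (0, 0) := by
    refine (hasBasis_cocompact.inf_principal _).eventually_iff.2 ⟨_, hcompact, ?_⟩
    rintro ⟨f, q⟩ ⟨hout, hf, hq⟩
    have hq' : ∀ i, 0 ≤ q i := fun i => hq i (Set.mem_univ i)
    obtain ⟨i, hi⟩ : ∃ i, K - F (0, 0) < q i := by
      by_contra! h
      exact hout ⟨hf, fun i _ => ⟨hq' i, h i⟩⟩
    linarith [hK f q hq', single_le_sum (fun i _ => hq' i) (mem_univ i)]
  obtain ⟨⟨fs, qs⟩, ⟨hfs, hqs⟩, hmax⟩ := hF.continuousOn.exists_isMaxOn' hs h₀ hfar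
  exact ⟨fs, qs, fun i => hqs i (Set.mem_univ i), fun k => abs_le.2 (hfs k (Set.mem_univ k)),
    fun f q hq hf => hmax ⟨fun k _ => abs_le.1 (hf k), fun i _ => hq i⟩⟩

noncomputable section

variable {n m l : ℕ} (B : Fin m → Fin l → ℝ) (H : Fin n → Fin m → ℝ) (α β : Fin m → ℝ)

def marketSlope (i : Fin n) : ℝ := ∑ j, β j * H i j

def quadPotential (f : Fin l → ℝ) (q : Fin n → ℝ) : ℝ :=
  ∑ j, (α j * demand B H f q j - β j * demand B H f q j ^ 2 / 2)
    - (∑ i, marketSlope H β i * q i ^ 2) / 2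

def potentialDeriv (f : Fin l → ℝ) (q : Fin n → ℝ) (δf : Fin l → ℝ) (δq : Fin n → ℝ) : ℝ :=
  ∑ j, (α j - β j * demand B H f q j) * demand B H δf δq j
    - ∑ i, marketSlope H β i * q i * δq i

def potentialQuad (δf : Fin l → ℝ) (δq : Fin n → ℝ) : ℝ :=
  -(∑ j, β j * demand B H δf δq j ^ 2 + ∑ i, marketSlope H β i * δq i ^ 2) / 2

/-- The partial derivative of `quadPotential` in `q i`; under A2 (`H i j ^ 2 = H i j`) it is
producer `i`'s marginal revenue. -/
def marginalRevenue (f : Fin l → ℝ) (q : Fin n → ℝ) (i : Fin n) : ℝ :=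
  ∑ j, H i j * (α j - β j * demand B H f q j) - marketSlope H β i * q i

lemma sum_marketSlope_mul (x : Fin n → ℝ) :
    ∑ i, marketSlope H β i * x i = ∑ j, β j * ∑ i, H i j * x i := by
  simp only [marketSlope, sum_mul, mul_sum]
  rw [sum_comm]
  exact sum_congr rfl fun j _ => sum_congr rfl fun i _ => by ring

lemma marketSlope_pos (hβ : ∀ j, 0 < β j) (hH : ∀ i j, H i j = 0 ∨ H i j = 1)
    (hH1 : ∀ i, ∑ j, H i j = 1) (i : Fin n) : 0 < marketSlope H β i := by
  obtain ⟨j, -, hj⟩ := exists_ne_zero_of_sum_ne_zero ((hH1 i).trans_ne one_ne_zero)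
  refine sum_pos' (fun j _ => ?_) ⟨j, mem_univ j, ?_⟩
  · rcases hH i j with h | h <;> simp [h, (hβ j).le]
  · simp [(hH i j).resolve_left hj, hβ j]

lemma demand_add_smul (f δf : Fin l → ℝ) (q δq : Fin n → ℝ) (t : ℝ) (j : Fin m) :
    demand B H (f + t • δf) (q + t • δq) j = demand B H f q j + t * demand B H δf δq j := by
  simp only [demand, Pi.add_apply, Pi.smul_apply, smul_eq_mul, mul_add, sum_add_distrib,
    mul_left_comm _ t, ← mul_sum]
  ring

lemma demand_update (f : Fin l → ℝ) (q : Fin n → ℝ) (i : Fin n) (x : ℝ) (j : Fin m) :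
    demand B H f (Function.update q i x) j = demand B H f q j + H i j * (x - q i) := by
  rw [demand, demand, Fintype.sum_update_apply (fun i' y => H i' j * y)]
  ring

lemma quadPotential_add_smul (f δf : Fin l → ℝ) (q δq : Fin n → ℝ) (t : ℝ) :
    quadPotential B H α β (f + t • δf) (q + t • δq) = quadPotential B H α β f q
      + t * potentialDeriv B H α β f q δf δq + t ^ 2 * potentialQuad B H β δf δq := by
  have hd : ∑ j, (α j * demand B H (f + t • δf) (q + t • δq) j
        - β j * demand B H (f + t • δf) (q + t • δq) j ^ 2 / 2)
      = ∑ j, (α j * demand B H f q j - β j * demand B H f q j ^ 2 / 2)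
        + t * ∑ j, (α j - β j * demand B H f q j) * demand B H δf δq j
        + t ^ 2 * ∑ j, -(β j * demand B H δf δq j ^ 2 / 2) := by
    rw [← sum_add_mul_add_sq_mul]
    exact sum_congr rfl fun j _ => by rw [demand_add_smul]; ring
  have hq : ∑ i, marketSlope H β i * (q + t • δq) i ^ 2
      = ∑ i, marketSlope H β i * q i ^ 2 + t * ∑ i, 2 * (marketSlope H β i * q i * δq i)
        + t ^ 2 * ∑ i, marketSlope H β i * δq i ^ 2 := by
    rw [← sum_add_mul_add_sq_mul]
    exact sum_congr rfl fun i _ => by simp only [Pi.add_apply, Pi.smul_apply, smul_eq_mul]; ring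
  rw [quadPotential, hd, hq, quadPotential, potentialDeriv, potentialQuad, ← mul_sum,
    sum_neg_distrib, ← sum_div]
  ring

lemma potentialDeriv_eq_add_sum_marginalRevenue (f : Fin l → ℝ) (q : Fin n → ℝ)
    (δf : Fin l → ℝ) (δq : Fin n → ℝ) :
    potentialDeriv B H α β f q δf δq
      = potentialDeriv B H α β f q δf 0 + ∑ i, δq i * marginalRevenue B H α β f q i := by
  have hd : ∀ j, demand B H δf δq j = demand B H δf 0 j + ∑ i, H i j * δq i := by
    simp [demand]
  have hswap : ∑ j, (α j - β j * demand B H f q j) * ∑ i, H i j * δq i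
      - ∑ i, marketSlope H β i * q i * δq i = ∑ i, δq i * marginalRevenue B H α β f q i := by
    simp only [mul_sum]
    rw [sum_comm, ← sum_sub_distrib]
    refine sum_congr rfl fun i _ => ?_
    rw [marginalRevenue, mul_sub, mul_sum]
    congr 1
    · exact sum_congr rfl fun j _ => by ring
    · ring
  simp only [potentialDeriv, hd, mul_add, sum_add_distrib, ← hswap, Pi.zero_apply, mul_zero,
    sum_const_zero]
  ring

lemma quadPotential_update (hH : ∀ i j, H i j = 0 ∨ H i j = 1) (f : Fin l → ℝ) (q : Fin n → ℝ)
    (i : Fin n) (x : ℝ) :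
    quadPotential B H α β f (Function.update q i x) = quadPotential B H α β f q
      + (x - q i) * marginalRevenue B H α β f q i - marketSlope H β i * (x - q i) ^ 2 := by
  have hHsq : ∀ j, β j * H i j ^ 2 = β j * H i j := fun j => by
    rcases hH i j with h | h <;> simp [h]
  have hquad : potentialQuad B H β 0 (Pi.single i 1) = -marketSlope H β i := by
    simp [potentialQuad, demand, Pi.single_apply, hHsq, marketSlope]
  have hderiv :
      potentialDeriv B H α β f q 0 (Pi.single i 1) = marginalRevenue B H α β f q i := by
    rw [potentialDeriv_eq_add_sum_marginalRevenue]
    simp [potentialDeriv, demand, Pi.single_apply]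
  have hexp := quadPotential_add_smul B H α β f 0 q (Pi.single i 1) (x - q i)
  rw [smul_zero, add_zero, ← Function.update_eq_add_smul_single] at hexp
  rw [hexp, hderiv, hquad]
  ring

lemma eq_zero_of_nonneg_potentialQuad (hβ : ∀ j, 0 < β j) (hS : ∀ i, 0 < marketSlope H β i)
    (δf : Fin l → ℝ) (δq : Fin n → ℝ) (h : 0 ≤ potentialQuad B H β δf δq) :
    δq = 0 ∧ ∀ j, ∑ k, B j k * δf k = 0 := by
  have hd : ∀ j ∈ univ, 0 ≤ β j * demand B H δf δq j ^ 2 :=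
    fun j _ => mul_nonneg (hβ j).le (sq_nonneg _)
  have hs : ∀ i ∈ univ, 0 ≤ marketSlope H β i * δq i ^ 2 :=
    fun i _ => mul_nonneg (hS i).le (sq_nonneg _)
  rw [potentialQuad] at h
  have hd0 := (sum_eq_zero_iff_of_nonneg hd).1 (by linarith [sum_nonneg hd, sum_nonneg hs])
  have hs0 := (sum_eq_zero_iff_of_nonneg hs).1 (by linarith [sum_nonneg hd, sum_nonneg hs])
  have hq : δq = 0 := funext fun i => by simpa [(hS i).ne'] using hs0 i (mem_univ i)
  refine ⟨hq, fun j => ?_⟩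
  simpa [(hβ j).ne', demand, hq] using hd0 j (mem_univ j)

variable (C : Fin n → ℝ → ℝ) (P : Fin m → ℝ → ℝ)

lemma potentialΦ_eq (hP : ∀ j d, P j d = α j - β j * d) (f : Fin l → ℝ) (q : Fin n → ℝ) :
    potentialΦ B H P C β f q = quadPotential B H α β f q - ∑ i, C i (q i) := by
  simp only [potentialΦ, makerW, quadPotential, hP, integral_sub_mul, sum_marketSlope_mul]
  ring

lemma makerW_sub_eq_potentialΦ_sub (f f' : Fin l → ℝ) (q : Fin n → ℝ) :
    makerW B H P C f' q - makerW B H P C f q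
      = potentialΦ B H P C β f' q - potentialΦ B H P C β f q := by
  simp only [potentialΦ]
  ring

lemma producerU_update_sub_eq_potentialΦ_sub (hH : ∀ i j, H i j = 0 ∨ H i j = 1)
    (hP : ∀ j d, P j d = α j - β j * d) (i : Fin n) (f : Fin l → ℝ) (q : Fin n → ℝ) (x : ℝ) :
    producerU B H P C i f (Function.update q i x) - producerU B H P C i f q
      = potentialΦ B H P C β f (Function.update q i x) - potentialΦ B H P C β f q := by
  have hprice : ∑ j, H i j * P j (demand B H f (Function.update q i x) j)
      = ∑ j, H i j * P j (demand B H f q j) - marketSlope H β i * (x - q i) := by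
    simp only [hP, demand_update, marketSlope, sum_mul, ← sum_sub_distrib]
    refine sum_congr rfl fun j _ => ?_
    rcases hH i j with h | h <;> simp only [h] <;> ring
  rw [producerU, producerU, potentialΦ_eq B H α β C P hP, potentialΦ_eq B H α β C P hP,
    quadPotential_update B H α β hH, hprice, Fintype.sum_update_apply C, Function.update_self,
    marginalRevenue]
  simp only [hP]
  ring

lemma potentialDeriv_nonpos_of_makerW_le (hP : ∀ j d, P j d = α j - β j * d) (c : Fin l → ℝ)
    (f : Fin l → ℝ) (q : Fin n → ℝ) (hf : ∀ k, |f k| ≤ c k)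
    (hmaker : ∀ f' : Fin l → ℝ, (∀ k, |f' k| ≤ c k) →
        makerW B H P C f' q ≤ makerW B H P C f q)
    (f' : Fin l → ℝ) (hf' : ∀ k, |f' k| ≤ c k) :
    potentialDeriv B H α β f q (f' - f) 0 ≤ 0 := by
  refine le_of_forall_add_mul_le (b := potentialQuad B H β (f' - f) 0) fun t ⟨ht₀, ht₁⟩ => ?_
  have hW := hmaker (f + t • (f' - f)) fun k => by
    simpa using abs_add_mul_sub_le (hf k) (hf' k) ht₀.le ht₁
  have hexp := quadPotential_add_smul B H α β f (f' - f) q 0 t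
  rw [smul_zero, add_zero] at hexp
  have hΦ := makerW_sub_eq_potentialΦ_sub B H β C P f (f + t • (f' - f)) q
  rw [potentialΦ_eq B H α β C P hP, potentialΦ_eq B H α β C P hP, hexp] at hΦ
  nlinarith

lemma mul_marginalRevenue_le_of_producerU_le (hH : ∀ i j, H i j = 0 ∨ H i j = 1)
    (hP : ∀ j d, P j d = α j - β j * d) (i : Fin n) (hC : ConvexOn ℝ Set.univ (C i))
    (f : Fin l → ℝ) (q : Fin n → ℝ) (hq : 0 ≤ q i)
    (hprod : ∀ x : ℝ, 0 ≤ x →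
        producerU B H P C i f (Function.update q i x) ≤ producerU B H P C i f q)
    (y : ℝ) (hy : 0 ≤ y) :
    (y - q i) * marginalRevenue B H α β f q i ≤ C i y - C i (q i) := by
  refine le_of_forall_add_mul_le (b := -(marketSlope H β i * (y - q i) ^ 2))
    fun t ⟨ht₀, ht₁⟩ => ?_
  have hU := hprod (q i + t * (y - q i)) (by nlinarith)
  rw [← sub_nonpos, producerU_update_sub_eq_potentialΦ_sub B H α β C P hH hP,
    potentialΦ_eq B H α β C P hP, potentialΦ_eq B H α β C P hP,
    quadPotential_update B H α β hH, Fintype.sum_update_apply C] at hU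
  nlinarith [hC.le_add_mul_sub (x := q i) (y := y) ht₀.le ht₁]

lemma potentialΦ_le_add_potentialQuad_of_nash (hH : ∀ i j, H i j = 0 ∨ H i j = 1)
    (hP : ∀ j d, P j d = α j - β j * d) (hC : ∀ i, ConvexOn ℝ Set.univ (C i)) (c : Fin l → ℝ)
    (f : Fin l → ℝ) (q : Fin n → ℝ) (hq : ∀ i, 0 ≤ q i) (hf : ∀ k, |f k| ≤ c k)
    (hprod : ∀ (i : Fin n) (x : ℝ), 0 ≤ x →
        producerU B H P C i f (Function.update q i x) ≤ producerU B H P C i f q)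
    (hmaker : ∀ f' : Fin l → ℝ, (∀ k, |f' k| ≤ c k) →
        makerW B H P C f' q ≤ makerW B H P C f q)
    (f' : Fin l → ℝ) (q' : Fin n → ℝ) (hq' : ∀ i, 0 ≤ q' i) (hf' : ∀ k, |f' k| ≤ c k) :
    potentialΦ B H P C β f' q'
      ≤ potentialΦ B H P C β f q + potentialQuad B H β (f' - f) (q' - q) := by
  have hmaker_block := potentialDeriv_nonpos_of_makerW_le B H α β C P hP c f q hf hmaker f' hf'
  have hproducer_blocks := sum_le_sum fun i (_ : i ∈ univ) =>
    mul_marginalRevenue_le_of_producerU_le B H α β C P hH hP i (hC i) f q (hq i) (hprod i)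
      (q' i) (hq' i)
  have hexp := quadPotential_add_smul B H α β f (f' - f) q (q' - q) 1
  rw [one_smul, one_smul, add_sub_cancel, add_sub_cancel,
    potentialDeriv_eq_add_sum_marginalRevenue] at hexp
  rw [potentialΦ_eq B H α β C P hP, potentialΦ_eq B H α β C P hP, hexp]
  rw [sum_sub_distrib] at hproducer_blocks
  simp only [Pi.sub_apply] at hproducer_blocks ⊢
  linarith

lemma continuous_potentialΦ (hP : ∀ j d, P j d = α j - β j * d) (hC : ∀ i, Continuous (C i)) :
    Continuous fun p : (Fin l → ℝ) × (Fin n → ℝ) => potentialΦ B H P C β p.1 p.2 := by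
  simp only [potentialΦ_eq B H α β C P hP, quadPotential, demand]
  fun_prop

lemma exists_potentialΦ_add_sum_le (hP : ∀ j d, P j d = α j - β j * d) (hβ : ∀ j, 0 < β j)
    (hS : ∀ i, 0 < marketSlope H β i) (hC : ∀ i, ConvexOn ℝ Set.univ (C i))
    (hC1 : ∀ i, Differentiable ℝ (C i)) :
    ∃ K, ∀ f q, (∀ i, 0 ≤ q i) → potentialΦ B H P C β f q + ∑ i, q i ≤ K := by
  refine ⟨∑ j, α j ^ 2 / (2 * β j)
    + ∑ i, ((1 - deriv (C i) 0) ^ 2 / (2 * marketSlope H β i) - C i 0), fun f q hq => ?_⟩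
  have hmarket : ∀ j ∈ univ, α j * demand B H f q j - β j * demand B H f q j ^ 2 / 2
      ≤ α j ^ 2 / (2 * β j) := fun j _ => mul_sub_mul_sq_div_two_le (hβ j)
  have hproducer : ∀ i ∈ univ, q i - C i (q i) - marketSlope H β i * q i ^ 2 / 2
      ≤ (1 - deriv (C i) 0) ^ 2 / (2 * marketSlope H β i) - C i 0 := fun i _ => by
    have htangent := (hC i).add_deriv_mul_sub_le ((hC1 i) 0) (hq i)
    have := mul_sub_mul_sq_div_two_le (a := 1 - deriv (C i) 0) (x := q i) (hS i)
    linarith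
  have hsum := add_le_add (sum_le_sum hmarket) (sum_le_sum hproducer)
  rw [potentialΦ_eq B H α β C P hP, quadPotential]
  simp only [sum_sub_distrib, ← sum_div] at hsum ⊢
  linarith

end

theorem stmt17_general {n m l : ℕ}
    (B : Fin m → Fin l → ℝ) (H : Fin n → Fin m → ℝ)
    (c : Fin l → ℝ) (hc : ∀ k, 0 ≤ c k)
    (α β : Fin m → ℝ) (hβ : ∀ j, 0 < β j)
    (C : Fin n → ℝ → ℝ)
    (hC : ∀ i, ConvexOn ℝ Set.univ (C i)) (hC1 : ∀ i, Differentiable ℝ (C i))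
    -- Assumption A2: each row of H has exactly one entry equal to 1, the rest 0
    (hH01 : ∀ i j, H i j = 0 ∨ H i j = 1)
    (hH1 : ∀ i, ∑ j, H i j = 1)
    (P : Fin m → ℝ → ℝ) (hP : ∀ j d, P j d = α j - β j * d) :
    ∃ (qs : Fin n → ℝ) (fs : Fin l → ℝ),
      (∀ i, 0 ≤ qs i) ∧ (∀ k, |fs k| ≤ c k) ∧
      -- (q*, f*) maximizes the potential Φ over the feasible set
      (∀ (q : Fin n → ℝ) (f : Fin l → ℝ), (∀ i, 0 ≤ q i) → (∀ k, |f k| ≤ c k) →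
          potentialΦ B H P C β f q ≤ potentialΦ B H P C β fs qs) ∧
      -- (q*, f*) is a Nash equilibrium
      (∀ (i : Fin n) (x : ℝ), 0 ≤ x →
          producerU B H P C i fs (Function.update qs i x) ≤ producerU B H P C i fs qs) ∧
      (∀ f : Fin l → ℝ, (∀ k, |f k| ≤ c k) →
          makerW B H P C f qs ≤ makerW B H P C fs qs) ∧
      -- uniqueness in the variables (q, Bf)
      (∀ (q : Fin n → ℝ) (f : Fin l → ℝ), (∀ i, 0 ≤ q i) → (∀ k, |f k| ≤ c k) →
        (∀ (i : Fin n) (x : ℝ), 0 ≤ x →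
            producerU B H P C i f (Function.update q i x) ≤ producerU B H P C i f q) →
        (∀ f' : Fin l → ℝ, (∀ k, |f' k| ≤ c k) →
            makerW B H P C f' q ≤ makerW B H P C f q) →
        q = qs ∧ (∀ j, ∑ k, B j k * f k = ∑ k, B j k * fs k)) := by
  have hS := marketSlope_pos H β hβ hH01 hH1
  obtain ⟨K, hK⟩ := exists_potentialΦ_add_sum_le B H α β C P hP hβ hS hC hC1
  obtain ⟨fs, qs, hqs, hfs, hmax⟩ := exists_forall_ge_of_add_sum_le
    (continuous_potentialΦ B H α β C P hP fun i => (hC1 i).continuous) c hc hK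
  refine ⟨qs, fs, hqs, hfs, fun q f hq hf => hmax f q hq hf, fun i x hx => ?_, fun f hf => ?_,
    fun q f hq hf hprod hmaker => ?_⟩
  · have hupdate : ∀ i', 0 ≤ Function.update qs i x i' := fun i' => by
      by_cases h : i' = i <;> simp [h, hx, hqs i']
    linarith [hmax fs _ hupdate hfs,
      producerU_update_sub_eq_potentialΦ_sub B H α β C P hH01 hP i fs qs x]
  · linarith [hmax f qs hqs hf, makerW_sub_eq_potentialΦ_sub B H β C P fs f qs]
  · have hnash := potentialΦ_le_add_potentialQuad_of_nash B H α β C P hH01 hP hC c f q hq hf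
      hprod hmaker fs qs hqs hfs
    obtain ⟨hq_eq, hBf⟩ := eq_zero_of_nonneg_potentialQuad B H β hβ hS (fs - f) (qs - q)
      (by linarith [hmax f q hq hf])
    refine ⟨(sub_eq_zero.1 hq_eq).symm, fun j => ?_⟩
    have hBfj := hBf j
    simp only [Pi.sub_apply, mul_sub, sum_sub_distrib] at hBfj
    linarith

/-- with affine prices `P j d = α j − β j d` (`α j > 0`, `β j > 0`), convex `C¹`
costs, and A2, the networked Cournot game with market maker has a unique Nash equilibrium in
the variables `(q, Bf)`: there is a Nash equilibrium `(q*, f*)` maximizing the potential `Φ`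
over the feasible set, and every Nash equilibrium `(q, f)` satisfies `q = q*` and
`Bf = Bf*`. -/
theorem stmt17 {n m l : ℕ}
    (B : Fin m → Fin l → ℝ) (H : Fin n → Fin m → ℝ)
    (c : Fin l → ℝ) (hc : ∀ k, 0 ≤ c k)
    (α β : Fin m → ℝ) (hα : ∀ j, 0 < α j) (hβ : ∀ j, 0 < β j)
    (C : Fin n → ℝ → ℝ)
    (hC : ∀ i, ConvexOn ℝ Set.univ (C i)) (hC1 : ∀ i, Differentiable ℝ (C i))
    -- Assumption A2: each row of H has exactly one entry equal to 1, the rest 0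
    (hH01 : ∀ i j, H i j = 0 ∨ H i j = 1)
    (hH1 : ∀ i, ∑ j, H i j = 1)
    (P : Fin m → ℝ → ℝ) (hP : ∀ j d, P j d = α j - β j * d) :
    ∃ (qs : Fin n → ℝ) (fs : Fin l → ℝ),
      (∀ i, 0 ≤ qs i) ∧ (∀ k, |fs k| ≤ c k) ∧
      -- (q*, f*) maximizes the potential Φ over the feasible set
      (∀ (q : Fin n → ℝ) (f : Fin l → ℝ), (∀ i, 0 ≤ q i) → (∀ k, |f k| ≤ c k) →
          potentialΦ B H P C β f q ≤ potentialΦ B H P C β fs qs) ∧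
      -- (q*, f*) is a Nash equilibrium
      (∀ (i : Fin n) (x : ℝ), 0 ≤ x →
          producerU B H P C i fs (Function.update qs i x) ≤ producerU B H P C i fs qs) ∧
      (∀ f : Fin l → ℝ, (∀ k, |f k| ≤ c k) →
          makerW B H P C f qs ≤ makerW B H P C fs qs) ∧
      -- uniqueness in the variables (q, Bf)
      (∀ (q : Fin n → ℝ) (f : Fin l → ℝ), (∀ i, 0 ≤ q i) → (∀ k, |f k| ≤ c k) →
        (∀ (i : Fin n) (x : ℝ), 0 ≤ x →
            producerU B H P C i f (Function.update q i x) ≤ producerU B H P C i f q) →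
        (∀ f' : Fin l → ℝ, (∀ k, |f' k| ≤ c k) →
            makerW B H P C f' q ≤ makerW B H P C f q) →
        q = qs ∧ (∀ j, ∑ k, B j k * f k = ∑ k, B j k * fs k)) :=
  stmt17_general B H c hc α β hβ C hC hC1 hH01 hH1 P hP
end
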